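/- arXiv:1609.07468 — 2 statements merged into one kernel-verified Lean document; each statement's English description precedes it below -/
import Mathlib

section
/- Let w be a non-zero algebraic number which is not a root of unity, and let q1, q2 be prime numbers with q1 ≠ q2 such that v_𝔭(w) = 0 for every prime ideal 𝔭 of O dividing q1·O or q2·O. Let m1, m2 be positive natural numbers and set s = q1^{m1}·q2^{m2}. Consider the finite group F = (O_w/sO_w) ⋊ ℤ/t_w(s)ℤ, where the distinguished generator of ℤ/t_w(s)ℤ acts on the additive group O_w/sO_w by multiplication by w. Then for every Dress subgroup D ≤ F there exists i ∈ {1,2} such that the image of D under the canonical projection η_i : F → (O_w/q_i^{m_i}O_w) ⋊ ℤ/t_w(q_i^{m_i})ℤ (given by reducing the first coordinate modulo q_i^{m_i}O_w and the second coordinate modulo t_w(q_i^{m_i})) is hyperelementary. -/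
open IsDedekindDomain NumberField

/-- For an element `w` of a number field `K`, the subring
`O_w = {x ∈ K | v_𝔭(x) ≥ 0 for all maximal ideals 𝔭 of the ring of integers with v_𝔭(w) = 0}`.
(In multiplicative notation, `v_𝔭(x) ≥ 0` reads `v.valuation x ≤ 1` and `v_𝔭(w) = 0` reads
`v.valuation w = 1`.) -/
noncomputable def Ow (K : Type*) [Field K] [NumberField K] (w : K) : Subring K where
  carrier := {x : K | ∀ v : HeightOneSpectrum (𝓞 K), v.valuation K w = 1 → v.valuation K x ≤ 1}
  zero_mem' := by intro v _; simp
  one_mem' := by intro v _; simp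
  add_mem' := by
    intro a b ha hb v hv
    exact le_trans (Valuation.map_add_le_max' _ _ _) (max_le (ha v hv) (hb v hv))
  mul_mem' := by
    intro a b ha hb v hv
    rw [Valuation.map_mul]
    exact mul_le_one' (ha v hv) (hb v hv)
  neg_mem' := by intro a ha v hv; rw [Valuation.map_neg]; exact ha v hv

theorem w_mem_Ow (K : Type*) [Field K] [NumberField K] (w : K) : w ∈ Ow K w :=
  fun _ hv => le_of_eq hv

/-- `w ^ z ≡ 1 mod s·O_w`, i.e. `w ^ z - 1 ∈ s·O_w` (as a condition in `K`). -/
def WPowCongOne (K : Type*) [Field K] [NumberField K] (w : K) (s : ℕ) (z : ℤ) : Prop :=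
  ∃ y ∈ Ow K w, w ^ z - 1 = (s : K) * y

/-- `t = t_w(s)`, i.e. `t·ℤ = {z : ℤ | w ^ z ≡ 1 mod s·O_w}`. -/
def IsTw (K : Type*) [Field K] [NumberField K] (w : K) (s t : ℕ) : Prop :=
  ∀ z : ℤ, (t : ℤ) ∣ z ↔ WPowCongOne K w s z

/-- The quotient ring `O_w / s·O_w`. -/
abbrev OwMod (K : Type*) [Field K] [NumberField K] (w : K) (s : ℕ) :=
  Ow K w ⧸ (Ideal.span {(s : Ow K w)} : Ideal (Ow K w))

/-- The class of `w` in `O_w / s·O_w`. -/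
noncomputable def wMod (K : Type*) [Field K] [NumberField K] (w : K) (s : ℕ) :
    OwMod K w s :=
  Ideal.Quotient.mk _ ⟨w, w_mem_Ow K w⟩

/-- `φ` is the action of `ℤ/tℤ` on the additive group of `O_w/s·O_w` in which the
distinguished generator `1` acts by multiplication by (the class of) `w`. -/
def IsWAction (K : Type*) [Field K] [NumberField K] (w : K) (s t : ℕ)
    (φ : Multiplicative (ZMod t) →* MulAut (Multiplicative (OwMod K w s))) : Prop :=
  ∀ x : OwMod K w s,
    φ (Multiplicative.ofAdd (1 : ZMod t)) (Multiplicative.ofAdd x)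
      = Multiplicative.ofAdd (wMod K w s * x)

/-- The group `F(s) = (O_w/sO_w) ⋊ ℤ/tℤ` with respect to an action `φ`. -/
abbrev Fgrp (K : Type*) [Field K] [NumberField K] (w : K) (s t : ℕ)
    (φ : Multiplicative (ZMod t) →* MulAut (Multiplicative (OwMod K w s))) :=
  Multiplicative (OwMod K w s) ⋊[φ] Multiplicative (ZMod t)

/-- A finite group `F` is a *Dress group* if there exist primes `p` and `q` and a normal
series `P ⊴ H ⊴ F` such that `P` is a `p`-group, `H/P` is cyclic and `F/H` is a `q`-group. -/
def IsDressGroup (F : Type*) [Group F] : Prop :=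
  ∃ p q : ℕ, p.Prime ∧ q.Prime ∧
    ∃ (P H : Subgroup F) (_ : P ≤ H) (hPH : (P.subgroupOf H).Normal) (hH : H.Normal),
      IsPGroup p P ∧
      (letI := hPH; IsCyclic (H ⧸ P.subgroupOf H)) ∧
      (letI := hH; IsPGroup q (F ⧸ H))

/-- A finite group is *hyperelementary* if it contains a cyclic normal subgroup whose
quotient is a `p`-group for some prime `p`. -/
def IsHyperelementary (F : Type*) [Group F] : Prop :=
  ∃ p : ℕ, p.Prime ∧ ∃ C : Subgroup F, ∃ hC : C.Normal, IsCyclic C ∧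
    (letI := hC; IsPGroup p (F ⧸ C))

/-!
Let `P ⊴ H ⊴ D` be a Dress series of `D` with `P` a `p`-group and `D/H` a `q`-group, and pick
`i` with `qᵢ ≠ p`. The image of `D` in `Fᵢ = (O_w/qᵢ^mᵢ) ⋊ ℤ/tᵢ` has the pushed-forward Dress
series, and the projection `ρ` to `ℤ/tᵢ` has a `qᵢ`-group as kernel. Here `tᵢ ≠ 0`: the class of
`w` is a unit of `O_w/qᵢ^mᵢ` that is congruent to an algebraic integer, so its powers take only
finitely many values.

Write `P`, `H` again for the images. Since `P ∩ ker ρ = 1`, `H` embeds into `(H/P) × ℤ/tᵢ`, so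
it is abelian and finite. Each Sylow subgroup of `H` meets `P` or `ker ρ` trivially, hence embeds
into the cyclic group `H/P` or `ℤ/tᵢ`. A finite abelian group whose Sylow subgroups are cyclic is
cyclic, so `H` is a cyclic normal subgroup with `q`-group quotient.
-/

section DenominatorIdeal

variable (R : Type*) {K : Type*} [CommRing R] [Field K] [Algebra R K]

def denominatorIdeal (x : K) : Ideal R :=
  (1 : Submodule R K).comap (LinearMap.toSpanSingleton R K x)

variable {R}

theorem mem_denominatorIdeal {x : K} {b : R} :
    b ∈ denominatorIdeal R x ↔ ∃ c : R, algebraMap R K c = algebraMap R K b * x := by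
  rw [denominatorIdeal, Submodule.mem_comap, Submodule.mem_one, LinearMap.toSpanSingleton_apply,
    Algebra.smul_def]

theorem denominatorIdeal_sup_span_eq_top [IsDedekindDomain R] [IsFractionRing R K] {x : K}
    {n : R} (hn : n ≠ 0)
    (hx : ∀ v : HeightOneSpectrum R, n ∈ v.asIdeal → v.valuation K x ≤ 1) :
    denominatorIdeal R x ⊔ Ideal.span {n} = ⊤ := by
  by_contra hne
  obtain ⟨M, hM, hle⟩ := Ideal.exists_le_maximal _ hne
  have hnM : n ∈ M := hle (Ideal.mem_sup_right (Ideal.mem_span_singleton_self n))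
  let v : HeightOneSpectrum R := ⟨M, hM.isPrime, fun h => hn (by rwa [h, Ideal.mem_bot] at hnM)⟩
  obtain ⟨c, d, hcd⟩ := v.exists_primeCompl_mul_eq_of_integer x (hx v hnM)
  exact d.2 (hle (Ideal.mem_sup_left (mem_denominatorIdeal.mpr ⟨c, by rw [← hcd, mul_comm]⟩)))

end DenominatorIdeal

section Period

variable (K : Type*) [Field K] [NumberField K] (w : K)

theorem algebraMap_mem_Ow (x : 𝓞 K) : algebraMap (𝓞 K) K x ∈ Ow K w :=
  fun v _ => v.valuation_le_one x

theorem inv_mem_Ow : w⁻¹ ∈ Ow K w :=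
  fun v hv => by rw [map_inv₀, hv, inv_one]

noncomputable def integersToOw : 𝓞 K →+* Ow K w :=
  (algebraMap (𝓞 K) K).codRestrict (Ow K w) (algebraMap_mem_Ow K w)

variable {K w} {s : ℕ}

theorem isUnit_wMod (hw0 : w ≠ 0) : IsUnit (wMod K w s) :=
  IsUnit.of_mul_eq_one (Ideal.Quotient.mk _ ⟨w⁻¹, inv_mem_Ow K w⟩) <| by
    rw [wMod, ← map_mul, ← map_one (Ideal.Quotient.mk _)]
    exact congrArg _ (Subtype.ext (mul_inv_cancel₀ hw0))

theorem wPowCongOne_of_wMod_pow_eq_one {n : ℕ} (h : wMod K w s ^ n = 1) :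
    WPowCongOne K w s n := by
  rw [wMod, ← map_pow, ← map_one (Ideal.Quotient.mk _), Ideal.Quotient.eq,
    Ideal.mem_span_singleton'] at h
  obtain ⟨y, hy⟩ := h
  refine ⟨y, y.2, ?_⟩
  have hyK : (y : K) * s = w ^ n - 1 := congrArg Subtype.val hy
  rw [zpow_natCast, ← hyK, mul_comm]

theorem exists_wMod_eq_integer (hs : s ≠ 0)
    (hval : ∀ v : HeightOneSpectrum (𝓞 K), (s : 𝓞 K) ∈ v.asIdeal → v.valuation K w ≤ 1) :
    ∃ c : 𝓞 K, wMod K w s = Ideal.Quotient.mk _ (integersToOw K w c) := by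
  obtain ⟨δ, hδ, e, he, hδe⟩ := Submodule.mem_sup.mp
    ((denominatorIdeal_sup_span_eq_top (Nat.cast_ne_zero.mpr hs) hval).symm ▸
      Submodule.mem_top : (1 : 𝓞 K) ∈ _)
  obtain ⟨c, hc⟩ := mem_denominatorIdeal.mp hδ
  obtain ⟨e, rfl⟩ := Ideal.mem_span_singleton'.mp he
  refine ⟨c, Ideal.Quotient.eq.mpr (Ideal.mem_span_singleton'.mpr ⟨⟨w, w_mem_Ow K w⟩ *
    integersToOw K w e, Subtype.ext ?_⟩)⟩
  -- `w - c = w (1 - δ)`, and `1 - δ` is the multiple `e s` of `s`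
  have hδe' : algebraMap (𝓞 K) K δ + algebraMap (𝓞 K) K e * s = 1 := by
    simpa using congrArg (algebraMap (𝓞 K) K) hδe
  change w * algebraMap (𝓞 K) K e * s = w - algebraMap (𝓞 K) K c
  rw [hc]
  linear_combination w * hδe'

theorem exists_wMod_pow_eq_pow (hs : s ≠ 0)
    (hval : ∀ v : HeightOneSpectrum (𝓞 K), (s : 𝓞 K) ∈ v.asIdeal → v.valuation K w ≤ 1) :
    ∃ a b : ℕ, a < b ∧ wMod K w s ^ a = wMod K w s ^ b := by
  obtain ⟨c, hc⟩ := exists_wMod_eq_integer hs hval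
  let I := Ideal.span {(s : 𝓞 K)}
  have hI : ∀ y ∈ I, Ideal.Quotient.mk (Ideal.span {(s : Ow K w)}) (integersToOw K w y) = 0 := by
    intro y hy
    obtain ⟨y', rfl⟩ := Ideal.mem_span_singleton'.mp hy
    refine Ideal.Quotient.eq_zero_iff_mem.mpr ?_
    rw [map_mul, map_natCast]
    exact Ideal.mul_mem_left _ _ (Ideal.mem_span_singleton_self _)
  have hpow : ∀ n : ℕ, wMod K w s ^ n =
      Ideal.Quotient.lift I ((Ideal.Quotient.mk _).comp (integersToOw K w)) hI
        (Ideal.Quotient.mk I (c ^ n)) := by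
    intro n
    rw [Ideal.Quotient.lift_mk, RingHom.comp_apply, map_pow, map_pow, hc]
  have : Finite (𝓞 K ⧸ I) :=
    Ideal.finiteQuotientOfFreeOfNeBot _ (by simpa [I, Ideal.span_singleton_eq_bot] using hs)
  obtain ⟨a, b, hab, heq⟩ := Finite.exists_ne_map_eq_of_infinite
    fun n : ℕ => Ideal.Quotient.mk I (c ^ n)
  rcases lt_or_gt_of_ne hab with h | h
  · exact ⟨a, b, h, by rw [hpow, hpow, heq]⟩
  · exact ⟨b, a, h, by rw [hpow, hpow, heq]⟩

theorem IsTw.ne_zero {t : ℕ} (ht : IsTw K w s t) (hw0 : w ≠ 0) (hs : s ≠ 0)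
    (hval : ∀ v : HeightOneSpectrum (𝓞 K), (s : 𝓞 K) ∈ v.asIdeal → v.valuation K w ≤ 1) :
    t ≠ 0 := by
  obtain ⟨a, b, hab, heq⟩ := exists_wMod_pow_eq_pow hs hval
  have hperiod : wMod K w s ^ (b - a) = 1 := by
    refine ((isUnit_wMod hw0).pow a).mul_left_cancel ?_
    rw [← pow_add, Nat.add_sub_cancel' hab.le, mul_one, heq]
  rintro rfl
  have := (ht _).mpr (wPowCongOne_of_wMod_pow_eq_one hperiod)
  rw [Nat.cast_zero, zero_dvd_iff] at this
  omega

end Period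

open scoped IsMulCommutative in
theorem IsZGroup.isCyclic_of_isMulCommutative (G : Type*) [Group G] [Finite G] [IsZGroup G]
    [IsMulCommutative G] : IsCyclic G :=
  IsCyclic.of_exponent_eq_card (IsZGroup.exponent_eq_card G)

theorem IsCyclic.finite_of_isMulTorsion {G : Type*} [Group G] [IsCyclic G]
    (hG : IsMulTorsion G) : Finite G := by
  obtain ⟨g, hg⟩ := IsCyclic.exists_generator (α := G)
  by_contra hfin
  rw [not_finite_iff_infinite] at hfin
  exact (hG g).orderOf_pos.ne' (Infinite.orderOf_eq_zero_of_forall_mem_zpowers hg)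

theorem IsMulTorsion.of_isPGroup_ker {G M : Type*} [Group G] [Group M] [Finite M] (ρ : G →* M)
    {π : ℕ} [Fact π.Prime] (hker : IsPGroup π ρ.ker) : IsMulTorsion G :=
  IsMulTorsion.extension_closed rfl isMulTorsion_of_finite
    fun x => hker.isOfFinOrder (Fact.out : π.Prime).ne_zero x

theorem Subgroup.isCyclic_of_disjoint_ker {G G' : Type*} [Group G] [Group G'] [IsCyclic G']
    (f : G →* G') {S : Subgroup G} (hS : Disjoint S f.ker) : IsCyclic S :=
  isCyclic_of_injective (f.domRestrict S) <| by
    rw [← MonoidHom.ker_eq_bot_iff, MonoidHom.ker_domRestrict, Subgroup.subgroupOf_eq_bot]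
    exact hS.symm

structure IsDressSeries {F : Type*} [Group F] (p q : ℕ) (P H : Subgroup F) : Prop where
  le : P ≤ H
  normal_subgroupOf : (P.subgroupOf H).Normal
  normal : H.Normal
  isPGroup : IsPGroup p P
  isCyclic_quotient : letI := normal_subgroupOf; IsCyclic (H ⧸ P.subgroupOf H)
  isPGroup_quotient : letI := normal; IsPGroup q (F ⧸ H)

theorem isDressGroup_iff {F : Type*} [Group F] :
    IsDressGroup F ↔ ∃ p q : ℕ, p.Prime ∧ q.Prime ∧ ∃ P H : Subgroup F, IsDressSeries p q P H :=
  ⟨fun ⟨p, q, hp, hq, P, H, hle, hPH, hH, h₁, h₂, h₃⟩ =>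
    ⟨p, q, hp, hq, P, H, ⟨hle, hPH, hH, h₁, h₂, h₃⟩⟩,
   fun ⟨p, q, hp, hq, P, H, ⟨hle, hPH, hH, h₁, h₂, h₃⟩⟩ =>
    ⟨p, q, hp, hq, P, H, hle, hPH, hH, h₁, h₂, h₃⟩⟩

namespace IsDressSeries

variable {F F' M : Type*} [Group F] [Group F'] [CommGroup M] {p q π : ℕ} {P H : Subgroup F}

theorem map (h : IsDressSeries p q P H) {f : F →* F'} (hf : Function.Surjective f) :
    IsDressSeries p q (P.map f) (H.map f) := by
  have := h.normal_subgroupOf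
  have := h.normal
  have hn : ((P.map f).subgroupOf (H.map f)).Normal := by
    rw [Subgroup.normal_subgroupOf_iff_le_normalizer (Subgroup.map_mono h.le)]
    exact (Subgroup.map_mono ((Subgroup.normal_subgroupOf_iff_le_normalizer h.le).mp ‹_›)).trans
      (Subgroup.le_normalizer_map f)
  have hH : (H.map f).Normal := h.normal.map f hf
  refine ⟨Subgroup.map_mono h.le, hn, hH, h.isPGroup.map f, ?_, ?_⟩
  · have := h.isCyclic_quotient
    refine isCyclic_of_surjective (QuotientGroup.map (P.subgroupOf H)
      ((P.map f).subgroupOf (H.map f)) (f.subgroupMap H) fun x hx => ⟨x, hx, rfl⟩) ?_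
    exact QuotientGroup.map_surjective_of_surjective _ _ _
      (QuotientGroup.mk_surjective.comp (f.subgroupMap_surjective H)) _
  · exact h.isPGroup_quotient.of_surjective (QuotientGroup.map _ _ f (Subgroup.le_comap_map f H))
      (QuotientGroup.map_surjective_of_surjective _ _ f (QuotientGroup.mk_surjective.comp hf) _)

theorem isZGroup (h : IsDressSeries p q P H) [IsCyclic M] (ρ : F →* M) [Fact p.Prime]
    [Fact π.Prime] (hpπ : p ≠ π) (hker : IsPGroup π ρ.ker) : IsZGroup H := by
  have := h.normal_subgroupOf
  have := h.isCyclic_quotient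
  refine ⟨fun ℓ hℓ S => ?_⟩
  have := Fact.mk hℓ
  by_cases hℓp : ℓ = p
  · subst hℓp
    refine Subgroup.isCyclic_of_disjoint_ker (ρ.comp H.subtype) ?_
    rw [← MonoidHom.comap_ker]
    exact IsPGroup.disjoint_of_ne ℓ π hpπ _ _ S.isPGroup' hker.comap_subtype
  · refine Subgroup.isCyclic_of_disjoint_ker (QuotientGroup.mk' (P.subgroupOf H)) ?_
    rw [QuotientGroup.ker_mk']
    exact IsPGroup.disjoint_of_ne ℓ p hℓp _ _ S.isPGroup' h.isPGroup.comap_subtype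

theorem isCyclic_of_isPGroup_ker (h : IsDressSeries p q P H) [IsCyclic M] [Finite M]
    (ρ : F →* M) [Fact p.Prime] [Fact π.Prime] (hpπ : p ≠ π) (hker : IsPGroup π ρ.ker) :
    IsCyclic H := by
  have := h.normal_subgroupOf
  have := h.isCyclic_quotient
  let _ : CommGroup (H ⧸ P.subgroupOf H) := IsCyclic.commGroup
  have : Finite (H ⧸ P.subgroupOf H) := IsCyclic.finite_of_isMulTorsion
    (((IsMulTorsion.of_isPGroup_ker ρ hker).subgroup H).of_surjective
      (QuotientGroup.mk'_surjective _))
  -- `H` embeds into the abelian group `(H ⧸ P) × M` because `P ∩ ker ρ = 1`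
  let θ : H →* (H ⧸ P.subgroupOf H) × M := (QuotientGroup.mk' _).prod (ρ.comp H.subtype)
  have hθ : Function.Injective θ := by
    rw [injective_iff_map_eq_one]
    intro x hx
    have hxP : x ∈ P.subgroupOf H := (QuotientGroup.eq_one_iff x).mp (congrArg Prod.fst hx)
    have hx' : (x : F) ∈ P ⊓ ρ.ker := ⟨hxP, congrArg Prod.snd hx⟩
    rw [(IsPGroup.disjoint_of_ne p π hpπ P ρ.ker h.isPGroup hker).eq_bot] at hx'
    exact Subtype.ext hx'
  have : Finite H := Finite.of_injective θ hθ
  have : IsMulCommutative H :=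
    isMulCommutative_iff.mpr fun a b => hθ (by rw [map_mul, map_mul, mul_comm])
  have := h.isZGroup ρ hpπ hker
  exact IsZGroup.isCyclic_of_isMulCommutative H

theorem isHyperelementary_of_isPGroup_ker (h : IsDressSeries p q P H) (hq : q.Prime)
    [IsCyclic M] [Finite M] (ρ : F →* M) [Fact p.Prime] [Fact π.Prime] (hpπ : p ≠ π)
    (hker : IsPGroup π ρ.ker) : IsHyperelementary F :=
  ⟨q, hq, H, h.normal, h.isCyclic_of_isPGroup_ker ρ hpπ hker, h.isPGroup_quotient⟩

end IsDressSeries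

theorem isPGroup_multiplicative_quotient_span_pow (R : Type*) [CommRing R] (p k : ℕ) :
    IsPGroup p (Multiplicative (R ⧸ Ideal.span {((p ^ k : ℕ) : R)})) := by
  intro x
  obtain ⟨a, ha⟩ := Ideal.Quotient.mk_surjective x.toAdd
  refine ⟨k, ?_⟩
  rw [← ofAdd_toAdd x, ← ha, ← ofAdd_nsmul, nsmul_eq_mul, ← map_natCast (Ideal.Quotient.mk _),
    ← map_mul, Ideal.Quotient.eq_zero_iff_mem.mpr (Ideal.mul_mem_right _ _
      (Ideal.mem_span_singleton_self _)), ofAdd_zero]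

theorem SemidirectProduct.isHyperelementary_map_of_isDressSeries {N G F : Type*} [Group N] [Group F]
    [CommGroup G] [IsCyclic G] [Finite G] {φ : G →* MulAut N} {π : ℕ} [Fact π.Prime]
    (hN : IsPGroup π N) (η : F →* N ⋊[φ] G) {D : Subgroup F} {p q : ℕ} [Fact p.Prime]
    (hq : q.Prime) (hpπ : p ≠ π) {P H : Subgroup D} (h : IsDressSeries p q P H) :
    IsHyperelementary (D.map η) := by
  have hker : IsPGroup π (rightHom : N ⋊[φ] G →* G).ker := by
    rw [← range_inl_eq_ker_rightHom]
    exact hN.of_surjective inl.rangeRestrict inl.rangeRestrict_surjective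
  refine (h.map (η.subgroupMap_surjective D)).isHyperelementary_of_isPGroup_ker hq
    (rightHom.comp (D.map η).subtype) hpπ ?_
  rw [← MonoidHom.comap_ker]
  exact hker.comap_subtype

theorem image_of_dress_subgroup_hyperelementary_general
    (K : Type*) [Field K] [NumberField K] (w : K) (hw0 : w ≠ 0)
    (q1 q2 : ℕ) (hq1 : q1.Prime) (hq2 : q2.Prime) (hq12 : q1 ≠ q2)
    (hval : ∀ v : IsDedekindDomain.HeightOneSpectrum (NumberField.RingOfIntegers K),
      ((q1 : NumberField.RingOfIntegers K) ∈ v.asIdeal ∨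
        (q2 : NumberField.RingOfIntegers K) ∈ v.asIdeal) → v.valuation K w = 1)
    (m1 m2 : ℕ)
    (t t1 t2 : ℕ)
    (ht1 : IsTw K w (q1 ^ m1) t1) (ht2 : IsTw K w (q2 ^ m2) t2)
    (φ : Multiplicative (ZMod t) →* MulAut (Multiplicative (OwMod K w (q1 ^ m1 * q2 ^ m2))))
    (φ1 : Multiplicative (ZMod t1) →* MulAut (Multiplicative (OwMod K w (q1 ^ m1))))
    (φ2 : Multiplicative (ZMod t2) →* MulAut (Multiplicative (OwMod K w (q2 ^ m2))))
    (η1 : Fgrp K w (q1 ^ m1 * q2 ^ m2) t φ →* Fgrp K w (q1 ^ m1) t1 φ1)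
    (η2 : Fgrp K w (q1 ^ m1 * q2 ^ m2) t φ →* Fgrp K w (q2 ^ m2) t2 φ2)
    (D : Subgroup (Fgrp K w (q1 ^ m1 * q2 ^ m2) t φ)) (hD : IsDressGroup D) :
    IsHyperelementary (D.map η1) ∨ IsHyperelementary (D.map η2) := by
  obtain ⟨p, q, hp, hq, P, H, hPH⟩ := isDressGroup_iff.mp hD
  have := Fact.mk hp
  have period_ne_zero : ∀ {r m τ : ℕ}, r.Prime → IsTw K w (r ^ m) τ →
      (∀ v : HeightOneSpectrum (𝓞 K), (r : 𝓞 K) ∈ v.asIdeal → v.valuation K w = 1) →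
      NeZero τ := fun hr ht hv =>
    ⟨ht.ne_zero hw0 (pow_ne_zero _ hr.ne_zero) fun v hv' =>
      (hv v (v.isPrime.mem_of_pow_mem _ (by rwa [Nat.cast_pow] at hv'))).le⟩
  by_cases hpq1 : p = q1
  · have := Fact.mk hq2
    have := period_ne_zero hq2 ht2 fun v hv => hval v (Or.inr hv)
    exact Or.inr (SemidirectProduct.isHyperelementary_map_of_isDressSeries
      (isPGroup_multiplicative_quotient_span_pow _ q2 m2) η2 hq (hpq1 ▸ hq12) hPH)
  · have := Fact.mk hq1
    have := period_ne_zero hq1 ht1 fun v hv => hval v (Or.inl hv)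
    exact Or.inl (SemidirectProduct.isHyperelementary_map_of_isDressSeries
      (isPGroup_multiplicative_quotient_span_pow _ q1 m1) η1 hq hpq1 hPH)

/-- Let `w` be a non-zero algebraic number which is not a root of unity, and
`q1 ≠ q2` primes such that `v_𝔭(w) = 0` for all primes `𝔭` of `O` dividing `q1·O` or `q2·O`.
Let `m1, m2 ≥ 1`, `s = q1^m1·q2^m2`, and let
`F = (O_w/sO_w) ⋊ ℤ/t_w(s)ℤ` (the generator acting by multiplication by `w`). Then for every
Dress subgroup `D ≤ F` there is `i ∈ {1,2}` such that the image of `D` under the canonical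
projection `η_i : F → (O_w/q_i^{m_i}O_w) ⋊ ℤ/t_w(q_i^{m_i})ℤ` is hyperelementary. -/
theorem image_of_dress_subgroup_hyperelementary
    (K : Type*) [Field K] [NumberField K] (w : K) (hw0 : w ≠ 0)
    (hgen : IntermediateField.adjoin ℚ {w} = ⊤)
    (hwnru : ∀ n : ℕ, 0 < n → w ^ n ≠ 1)
    (q1 q2 : ℕ) (hq1 : q1.Prime) (hq2 : q2.Prime) (hq12 : q1 ≠ q2)
    (hval : ∀ v : IsDedekindDomain.HeightOneSpectrum (NumberField.RingOfIntegers K),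
      ((q1 : NumberField.RingOfIntegers K) ∈ v.asIdeal ∨
        (q2 : NumberField.RingOfIntegers K) ∈ v.asIdeal) → v.valuation K w = 1)
    (m1 m2 : ℕ) (hm1 : 0 < m1) (hm2 : 0 < m2)
    (t t1 t2 : ℕ)
    (ht : IsTw K w (q1 ^ m1 * q2 ^ m2) t)
    (ht1 : IsTw K w (q1 ^ m1) t1) (ht2 : IsTw K w (q2 ^ m2) t2)
    (φ : Multiplicative (ZMod t) →* MulAut (Multiplicative (OwMod K w (q1 ^ m1 * q2 ^ m2))))
    (hφ : IsWAction K w (q1 ^ m1 * q2 ^ m2) t φ)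
    (φ1 : Multiplicative (ZMod t1) →* MulAut (Multiplicative (OwMod K w (q1 ^ m1))))
    (hφ1 : IsWAction K w (q1 ^ m1) t1 φ1)
    (φ2 : Multiplicative (ZMod t2) →* MulAut (Multiplicative (OwMod K w (q2 ^ m2))))
    (hφ2 : IsWAction K w (q2 ^ m2) t2 φ2)
    (η1 : Fgrp K w (q1 ^ m1 * q2 ^ m2) t φ →* Fgrp K w (q1 ^ m1) t1 φ1)
    (hη1 : ∀ (x : Ow K w) (k : ℤ),
      η1 ⟨Multiplicative.ofAdd (Ideal.Quotient.mk _ x), Multiplicative.ofAdd ((k : ZMod t))⟩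
        = ⟨Multiplicative.ofAdd (Ideal.Quotient.mk _ x),
            Multiplicative.ofAdd ((k : ZMod t1))⟩)
    (η2 : Fgrp K w (q1 ^ m1 * q2 ^ m2) t φ →* Fgrp K w (q2 ^ m2) t2 φ2)
    (hη2 : ∀ (x : Ow K w) (k : ℤ),
      η2 ⟨Multiplicative.ofAdd (Ideal.Quotient.mk _ x), Multiplicative.ofAdd ((k : ZMod t))⟩
        = ⟨Multiplicative.ofAdd (Ideal.Quotient.mk _ x),
            Multiplicative.ofAdd ((k : ZMod t2))⟩)
    (D : Subgroup (Fgrp K w (q1 ^ m1 * q2 ^ m2) t φ)) (hD : IsDressGroup D) :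
    IsHyperelementary (D.map η1) ∨ IsHyperelementary (D.map η2) :=
  image_of_dress_subgroup_hyperelementary_general K w hw0 q1 q2 hq1 hq2 hq12 hval m1 m2 t t1 t2 ht1
    ht2 φ φ1 φ2 η1 η2 D hD
end

section
/- Let G be a finite group, let p ≠ q be primes, and let A be a normal subgroup of G such that A is a q-group and the quotient G/A is cyclic. Let H be a subgroup of G and let P be a normal subgroup of H which is a p-group, such that the quotient H/P is cyclic of order coprime to p. Then H is cyclic. -/
/-!
Let `f : H → G ⧸ A` be the restriction of the quotient map. Its kernel `A ∩ H` is a `q`-group,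
so it meets the `p`-group `P` trivially. Hence `H` embeds in the abelian group `H ⧸ P × G ⧸ A`
and `P` embeds in the cyclic group `G ⧸ A`. An abelian group with a cyclic subgroup and cyclic
quotient of coprime orders is cyclic.
-/

section

variable {G Q : Type*} [Group G] [Group Q]

theorem MonoidHom.injective_prod_mk'_of_disjoint_ker {N : Subgroup G} [N.Normal] (f : G →* Q)
    (h : Disjoint N f.ker) : Function.Injective ((QuotientGroup.mk' N).prod f) := by
  rw [← MonoidHom.ker_eq_bot_iff, MonoidHom.ker_prod, QuotientGroup.ker_mk']
  exact h.eq_bot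

theorem isMulCommutative_of_disjoint_ker {N : Subgroup G} [N.Normal] [IsMulCommutative (G ⧸ N)]
    [IsMulCommutative Q] (f : G →* Q) (h : Disjoint N f.ker) : IsMulCommutative G :=
  ⟨⟨fun a b ↦ f.injective_prod_mk'_of_disjoint_ker h <| by
    simp only [map_mul]; exact mul_comm' _ _⟩⟩

theorem Subgroup.isCyclic_of_disjoint_ker_s3 {N : Subgroup G} [IsCyclic Q] (f : G →* Q)
    (h : Disjoint N f.ker) : IsCyclic N :=
  isCyclic_of_injective (f.comp N.subtype) <| by
    rw [← MonoidHom.ker_eq_bot_iff, ← MonoidHom.comap_ker, Subgroup.comap_subtype,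
      Subgroup.subgroupOf_eq_bot]
    exact h.symm

theorem isCyclic_of_disjoint_ker_of_coprime {N : Subgroup G} [N.Normal] [IsCyclic (G ⧸ N)]
    [IsCyclic Q] (f : G →* Q) (h : Disjoint N f.ker)
    (hcop : (Nat.card N).Coprime (Nat.card (G ⧸ N))) : IsCyclic G := by
  have := isMulCommutative_of_disjoint_ker f h
  have : IsCyclic (QuotientGroup.mk' N).ker := by
    rw [QuotientGroup.ker_mk']
    exact Subgroup.isCyclic_of_disjoint_ker_s3 f h
  open scoped IsMulCommutative in
  exact Group.isCyclic_of_coprime_card_ker (QuotientGroup.mk' N)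
    (by rwa [QuotientGroup.ker_mk']) (QuotientGroup.mk'_surjective N)

end

/-- Let `G` be a finite group, `p ≠ q` primes, and `A ⊴ G` a normal `q`-subgroup
with `G/A` cyclic. Let `H ≤ G` and let `P` be a normal `p`-subgroup of `H` such that `H/P` is
cyclic of order coprime to `p`. Then `H` is cyclic. -/
theorem cyclic_of_p_by_cyclic_in_q_by_cyclic (G : Type*) [Group G] [Finite G]
    (p q : ℕ) (hp : p.Prime) (hq : q.Prime) (hpq : p ≠ q)
    (A : Subgroup G) [A.Normal] (hA : IsPGroup q A) (hGA : IsCyclic (G ⧸ A))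
    (H : Subgroup G) (P : Subgroup H) [P.Normal] (hP : IsPGroup p P)
    (hHP : IsCyclic (H ⧸ P)) (hcop : (Nat.card (H ⧸ P)).Coprime p) :
    IsCyclic H := by
  have := Fact.mk hp
  have := Fact.mk hq
  let f : H →* G ⧸ A := (QuotientGroup.mk' A).comp H.subtype
  have hker : IsPGroup q f.ker := by
    rw [← MonoidHom.comap_ker, QuotientGroup.ker_mk']
    exact hA.comap_subtype
  obtain ⟨n, hn⟩ := hP.exists_card_eq
  refine isCyclic_of_disjoint_ker_of_coprime f (IsPGroup.disjoint_of_ne p q hpq P f.ker hP hker) ?_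
  rw [hn]
  exact (hcop.pow_right n).symm
end
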